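/- arXiv:1412.0778 — 4 statements merged into one kernel-verified Lean document; each statement's English description precedes it below -/
import Mathlib

section
/- Let K_t, K_s be positive integers, let T = [a1, b1] and S = [a2, b2] be compact real intervals, and let b_t : T → ℝ^{K_t} and b_s : S → ℝ^{K_s} be functions such that every entrywise product b_{ti}·b_{tj} is integrable on T and every entrywise product b_{si}·b_{sj} is integrable on S. Define the Gram matrices Q_t = (∫_T b_{ti}(t) b_{tj}(t) dt)_{1≤i,j≤K_t} and Q_s = (∫_S b_{si}(s) b_{sj}(s) ds)_{1≤i,j≤K_s}. Let P_t be a K_t×K_t real matrix, P_s a K_s×K_s real matrix, Θ ∈ ℝ^{K_t×K_s}, θ = vec(Θ), and λ_s, λ_t ∈ ℝ. Then λ_s ∫_T (Θᵀ b_t(t))ᵀ P_s (Θᵀ b_t(t)) dt + λ_t ∫_S (Θ b_s(s))ᵀ P_t (Θ b_s(s)) ds = θᵀ [λ_s (P_s ⊗ Q_t) + λ_t (Q_s ⊗ P_t)] θ. -/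
open Matrix MeasureTheory Kronecker

lemma quad_reassoc {m n : ℕ} (A : Matrix (Fin m) (Fin n) ℝ) (P : Matrix (Fin n) (Fin n) ℝ)
    (v : Fin m → ℝ) :
    (Aᵀ *ᵥ v) ⬝ᵥ (P *ᵥ (Aᵀ *ᵥ v)) = v ⬝ᵥ ((A * P * Aᵀ) *ᵥ v) := by
  rw [← Matrix.mulVec_mulVec, ← Matrix.mulVec_mulVec]
  conv_rhs => rw [dotProduct_mulVec, ← Matrix.mulVec_transpose]

lemma quad_reassoc' {m n : ℕ} (A : Matrix (Fin m) (Fin n) ℝ) (P : Matrix (Fin m) (Fin m) ℝ)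
    (v : Fin n → ℝ) :
    (A *ᵥ v) ⬝ᵥ (P *ᵥ (A *ᵥ v)) = v ⬝ᵥ ((Aᵀ * P * A) *ᵥ v) := by
  have h := quad_reassoc Aᵀ P v
  rw [transpose_transpose] at h
  rw [h]

lemma quad_sum {n : ℕ} (M : Matrix (Fin n) (Fin n) ℝ) (v : Fin n → ℝ) :
    v ⬝ᵥ (M *ᵥ v) = ∑ k, ∑ l, M k l * (v k * v l) := by
  simp only [dotProduct, mulVec, Finset.mul_sum]
  exact Finset.sum_congr rfl fun k _ => Finset.sum_congr rfl fun l _ => by ring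

lemma integral_quad {n : ℕ} (M : Matrix (Fin n) (Fin n) ℝ) (b : ℝ → Fin n → ℝ)
    (s : Set ℝ) (hb : ∀ i j, IntegrableOn (fun t => b t i * b t j) s) :
    ∫ t in s, ∑ k, ∑ l, M k l * (b t k * b t l)
      = ∑ k, ∑ l, M k l * ∫ t in s, b t k * b t l := by
  rw [integral_finset_sum]
  · refine Finset.sum_congr rfl fun k _ => ?_
    rw [integral_finset_sum]
    · exact Finset.sum_congr rfl fun l _ => MeasureTheory.integral_const_mul _ _
    · exact fun l _ => (hb k l).const_mul _
  · intro k _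
    exact integrable_finset_sum _ fun l _ => (hb k l).const_mul _

lemma sumsum_eq_trace {m n : ℕ} (M N : Matrix (Fin m) (Fin n) ℝ) :
    ∑ k, ∑ l, M k l * N k l = Matrix.trace (M * Nᵀ) := by
  simp [Matrix.trace, Matrix.mul_apply, Matrix.diag]

lemma kron_mulVec {m n : ℕ} (A : Matrix (Fin m) (Fin n) ℝ) (P : Matrix (Fin n) (Fin n) ℝ)
    (Q : Matrix (Fin m) (Fin m) ℝ) (θ : Fin n × Fin m → ℝ) (hθ : ∀ p, θ p = A p.2 p.1) :
    (P ⊗ₖ Q) *ᵥ θ = fun p => (Q * A * Pᵀ) p.2 p.1 := by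
  funext p
  simp only [mulVec, dotProduct, kroneckerMap_apply, Matrix.mul_apply, transpose_apply,
    Fintype.sum_prod_type, Finset.sum_mul, hθ]
  refine Finset.sum_congr rfl fun j _ => Finset.sum_congr rfl fun l _ => by ring

lemma kron_quad {m n : ℕ} (A : Matrix (Fin m) (Fin n) ℝ) (P : Matrix (Fin n) (Fin n) ℝ)
    (Q : Matrix (Fin m) (Fin m) ℝ) (θ : Fin n × Fin m → ℝ) (hθ : ∀ p, θ p = A p.2 p.1) :
    θ ⬝ᵥ ((P ⊗ₖ Q) *ᵥ θ) = Matrix.trace (Q * A * Pᵀ * Aᵀ) := by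
  rw [kron_mulVec A P Q θ hθ]
  simp only [dotProduct, Fintype.sum_prod_type, hθ]
  rw [show Q * A * Pᵀ * Aᵀ = (Q * A * Pᵀ) * Aᵀ from rfl, Matrix.trace_mul_comm]
  simp only [Matrix.trace, Matrix.mul_apply, Matrix.diag, transpose_apply]

/-- Paper's Theorem 1 (exact evaluation of Wood's tensor product penalty):
for a tensor product spline with coefficient matrix `Θ`,
`λ_s ∫_T r_s[f(t,·)] dt + λ_t ∫_S r_t[f(·,s)] ds
  = θᵀ [λ_s (P_s ⊗ Q_t) + λ_t (Q_s ⊗ P_t)] θ`, where `θ = vec(Θ)`. -/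
theorem wood_tensor_product_penalty
    {Kt Ks : ℕ} (hKt : 0 < Kt) (hKs : 0 < Ks)
    (a₁ b₁ a₂ b₂ : ℝ)
    (bt : ℝ → Fin Kt → ℝ) (bs : ℝ → Fin Ks → ℝ)
    (hbt : ∀ i j : Fin Kt,
      IntegrableOn (fun t => bt t i * bt t j) (Set.Icc a₁ b₁))
    (hbs : ∀ i j : Fin Ks,
      IntegrableOn (fun s => bs s i * bs s j) (Set.Icc a₂ b₂))
    (Qt : Matrix (Fin Kt) (Fin Kt) ℝ)
    (hQt : ∀ i j, Qt i j = ∫ t in Set.Icc a₁ b₁, bt t i * bt t j)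
    (Qs : Matrix (Fin Ks) (Fin Ks) ℝ)
    (hQs : ∀ i j, Qs i j = ∫ s in Set.Icc a₂ b₂, bs s i * bs s j)
    (Pt : Matrix (Fin Kt) (Fin Kt) ℝ) (Ps : Matrix (Fin Ks) (Fin Ks) ℝ)
    (Θ : Matrix (Fin Kt) (Fin Ks) ℝ)
    (θ : Fin Ks × Fin Kt → ℝ) (hθ : ∀ p, θ p = Θ p.2 p.1)
    (lams lamt : ℝ) :
    lams * (∫ t in Set.Icc a₁ b₁, (Θᵀ *ᵥ bt t) ⬝ᵥ (Ps *ᵥ (Θᵀ *ᵥ bt t)))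
      + lamt * (∫ s in Set.Icc a₂ b₂, (Θ *ᵥ bs s) ⬝ᵥ (Pt *ᵥ (Θ *ᵥ bs s)))
      = θ ⬝ᵥ ((lams • (Ps ⊗ₖ Qt) + lamt • (Qs ⊗ₖ Pt)) *ᵥ θ) := by
  have h1 : (∫ t in Set.Icc a₁ b₁, (Θᵀ *ᵥ bt t) ⬝ᵥ (Ps *ᵥ (Θᵀ *ᵥ bt t)))
      = Matrix.trace (Qt * Θ * Psᵀ * Θᵀ) := by
    simp_rw [quad_reassoc, quad_sum]
    rw [integral_quad _ _ _ hbt]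
    have : ∑ k, ∑ l, (Θ * Ps * Θᵀ) k l * (∫ t in Set.Icc a₁ b₁, bt t k * bt t l)
        = ∑ k, ∑ l, (Θ * Ps * Θᵀ) k l * Qt k l :=
      Finset.sum_congr rfl fun k _ => Finset.sum_congr rfl fun l _ => by rw [hQt]
    rw [this, sumsum_eq_trace, ← Matrix.trace_transpose]
    congr 1
    simp [Matrix.transpose_mul, Matrix.mul_assoc]
  have h2 : (∫ s in Set.Icc a₂ b₂, (Θ *ᵥ bs s) ⬝ᵥ (Pt *ᵥ (Θ *ᵥ bs s)))
      = Matrix.trace (Pt * Θ * Qsᵀ * Θᵀ) := by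
    simp_rw [quad_reassoc', quad_sum]
    rw [integral_quad _ _ _ hbs]
    have : ∑ i, ∑ j, (Θᵀ * Pt * Θ) i j * (∫ s in Set.Icc a₂ b₂, bs s i * bs s j)
        = ∑ i, ∑ j, (Θᵀ * Pt * Θ) i j * Qs i j :=
      Finset.sum_congr rfl fun i _ => Finset.sum_congr rfl fun j _ => by rw [hQs]
    rw [this, sumsum_eq_trace]
    rw [show Θᵀ * Pt * Θ * Qsᵀ = Θᵀ * (Pt * Θ * Qsᵀ) by
      simp [Matrix.mul_assoc], Matrix.trace_mul_comm]
  rw [Matrix.add_mulVec, dotProduct_add, smul_mulVec, smul_mulVec,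
    dotProduct_smul, dotProduct_smul, smul_eq_mul, smul_eq_mul,
    kron_quad Θ Ps Qt θ hθ, kron_quad Θ Qs Pt θ hθ, h1, h2]
end

section
/- Let X be an n×p real matrix with XᵀX invertible, let B_s be an L×K_s real matrix with B_s 1_{K_s} = 1_L, let P_s be a K_s×K_s real matrix with P_s 1_{K_s} = 0, let W be an invertible L×L real matrix (a precision matrix estimate), and let Λ be a p×p real matrix. Assume the matrix G := (B_sᵀ W B_s) ⊗ (XᵀX) + (P_s ⊗ Λ) is invertible, and define the hat matrix 𝓗 = (B_s ⊗ X) G^{-1} [(B_sᵀ W) ⊗ Xᵀ]. Then for every ℓ ∈ {1, …, L}, the pointwise degrees of freedom d_ℓ = tr[(e_ℓᵀ ⊗ I_n) 𝓗 (1_L ⊗ I_n)] equals p. -/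
open Matrix Kronecker

/-- Paper's Theorem 3: for the penalized GLS fit of a varying-coefficient
(function-on-scalar) model, the pointwise degrees of freedom
`d_ℓ = tr[(e_ℓᵀ ⊗ I_n) 𝓗 (1_L ⊗ I_n)]` equals `p` at every location `ℓ`. -/
theorem pointwise_df_varying_coefficient
    {n p L Ks : ℕ}
    (X : Matrix (Fin n) (Fin p) ℝ) (hX : IsUnit (Xᵀ * X).det)
    (Bs : Matrix (Fin L) (Fin Ks) ℝ)
    (hBs1 : Bs *ᵥ (fun _ => (1 : ℝ)) = fun _ => 1)
    (Ps : Matrix (Fin Ks) (Fin Ks) ℝ)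
    (hPs1 : Ps *ᵥ (fun _ => (1 : ℝ)) = 0)
    (W : Matrix (Fin L) (Fin L) ℝ) (hW : IsUnit W.det)
    (Λ : Matrix (Fin p) (Fin p) ℝ)
    (G : Matrix (Fin Ks × Fin p) (Fin Ks × Fin p) ℝ)
    (hG : G = (Bsᵀ * W * Bs) ⊗ₖ (Xᵀ * X) + Ps ⊗ₖ Λ)
    (hGinv : IsUnit G.det)
    (H : Matrix (Fin L × Fin n) (Fin L × Fin n) ℝ)
    (hH : H = (Bs ⊗ₖ X) * G⁻¹ * ((Bsᵀ * W) ⊗ₖ Xᵀ))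
    (ℓ : Fin L) :
    Matrix.trace
      (((Matrix.of fun (_ : Unit) (j : Fin L) => if j = ℓ then (1 : ℝ) else 0)
            ⊗ₖ (1 : Matrix (Fin n) (Fin n) ℝ))
        * H *
        ((Matrix.of fun (_ : Fin L) (_ : Unit) => (1 : ℝ))
            ⊗ₖ (1 : Matrix (Fin n) (Fin n) ℝ)))
      = p := by
  set C : Matrix (Fin p) (Fin p) ℝ := Xᵀ * X with hCdef
  set JK : Matrix (Fin Ks) Unit ℝ := Matrix.of (fun _ _ => (1 : ℝ)) with hJK
  set JL : Matrix (Fin L) Unit ℝ := Matrix.of (fun _ _ => (1 : ℝ)) with hJL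
  set E : Matrix Unit (Fin L) ℝ :=
    Matrix.of (fun _ j => if j = ℓ then (1 : ℝ) else 0) with hE
  have hBsJ : Bs * JK = JL := by
    ext i u
    have := congrFun hBs1 i
    simpa [Matrix.mul_apply, Matrix.mulVec, dotProduct, hJK, hJL] using this
  have hPsJ : Ps * JK = 0 := by
    ext i u
    have := congrFun hPs1 i
    simpa [Matrix.mul_apply, Matrix.mulVec, dotProduct, hJK] using this
  have key1 : G * (JK ⊗ₖ (1 : Matrix (Fin p) (Fin p) ℝ))
      = (Bsᵀ * W * JL) ⊗ₖ C := by
    rw [hG, Matrix.add_mul, ← Matrix.mul_kronecker_mul, ← Matrix.mul_kronecker_mul,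
      hPsJ, Matrix.zero_kronecker, add_zero, Matrix.mul_one,
      Matrix.mul_assoc (Bsᵀ * W) Bs JK, hBsJ]
  have hCinv : C * (C⁻¹ * Xᵀ) = Xᵀ := by
    rw [← Matrix.mul_assoc, Matrix.mul_nonsing_inv _ hX, Matrix.one_mul]
  have key2 : (Bsᵀ * W * JL) ⊗ₖ Xᵀ = G * (JK ⊗ₖ (C⁻¹ * Xᵀ)) := by
    have h1 : ((Bsᵀ * W * JL) ⊗ₖ C) * ((1 : Matrix Unit Unit ℝ) ⊗ₖ (C⁻¹ * Xᵀ))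
        = (Bsᵀ * W * JL) ⊗ₖ Xᵀ := by
      rw [← Matrix.mul_kronecker_mul, Matrix.mul_one, hCinv]
    have h2 : (JK ⊗ₖ (1 : Matrix (Fin p) (Fin p) ℝ))
        * ((1 : Matrix Unit Unit ℝ) ⊗ₖ (C⁻¹ * Xᵀ)) = JK ⊗ₖ (C⁻¹ * Xᵀ) := by
      rw [← Matrix.mul_kronecker_mul, Matrix.mul_one, Matrix.one_mul]
    rw [← h1, ← key1, Matrix.mul_assoc, h2]
  have key3 : G⁻¹ * ((Bsᵀ * W * JL) ⊗ₖ Xᵀ) = JK ⊗ₖ (C⁻¹ * Xᵀ) := by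
    rw [key2, ← Matrix.mul_assoc, Matrix.nonsing_inv_mul _ hGinv, Matrix.one_mul]
  have hEJL : E * JL = (1 : Matrix Unit Unit ℝ) := by
    ext u v
    simp [Matrix.mul_apply, hE, hJL, Matrix.one_apply]
  have hright : ((Bsᵀ * W) ⊗ₖ Xᵀ) * (JL ⊗ₖ (1 : Matrix (Fin n) (Fin n) ℝ))
      = (Bsᵀ * W * JL) ⊗ₖ Xᵀ := by
    rw [← Matrix.mul_kronecker_mul, Matrix.mul_one]
  have step1 : (Bs ⊗ₖ X) * (JK ⊗ₖ (C⁻¹ * Xᵀ)) = JL ⊗ₖ (X * (C⁻¹ * Xᵀ)) := by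
    rw [← Matrix.mul_kronecker_mul, hBsJ]
  have hMain :
      (E ⊗ₖ (1 : Matrix (Fin n) (Fin n) ℝ)) * H
        * (JL ⊗ₖ (1 : Matrix (Fin n) (Fin n) ℝ))
      = (1 : Matrix Unit Unit ℝ) ⊗ₖ (X * (C⁻¹ * Xᵀ)) := by
    rw [hH]
    simp only [Matrix.mul_assoc]
    rw [hright, key3, step1, ← Matrix.mul_kronecker_mul, hEJL, Matrix.one_mul]
  rw [hMain, Matrix.trace_kronecker]
  have : Matrix.trace (X * (C⁻¹ * Xᵀ)) = (p : ℝ) := by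
    rw [Matrix.trace_mul_comm, Matrix.mul_assoc, ← hCdef,
      Matrix.nonsing_inv_mul _ hX, Matrix.trace_one]
    simp
  simp [this]
end

section
/- Let A_t be an n×K_t real matrix with A_tᵀ A_t = I_{K_t}, M a K_t×L real matrix, and H_s an L×L real matrix. Let 𝓗 be the unique nL×nL matrix such that vec(A_t [M ⊙ (A_tᵀ Y)] H_sᵀ) = 𝓗 vec(Y) for every Y ∈ ℝ^{n×L}. Then the pointwise degrees of freedom vector d ∈ ℝ^L, with d_ℓ = tr[(e_ℓᵀ ⊗ I_n) 𝓗 (1_L ⊗ I_n)], satisfies d = H_s (Mᵀ 1_{K_t}). -/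
open Matrix Kronecker

/-- Paper's Theorem 6(b): for the penalized variant of the two-step method, with fitted
values `Ŷ = A_t [M ⊙ (A_tᵀ Y)] H_sᵀ` (where `A_tᵀ A_t = I`), the pointwise df vector is
the spatial smoother applied to the initial df vector: `d = H_s (Mᵀ 1_{K_t})`. -/
theorem pointwise_df_two_step_penalized
    {n L Kt : ℕ}
    (At : Matrix (Fin n) (Fin Kt) ℝ) (hAt : Atᵀ * At = 1)
    (M : Matrix (Fin Kt) (Fin L) ℝ)
    (Hs : Matrix (Fin L) (Fin L) ℝ)
    (H : Matrix (Fin L × Fin n) (Fin L × Fin n) ℝ)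
    (hH : ∀ Y : Matrix (Fin n) (Fin L) ℝ,
      (fun p : Fin L × Fin n => (At * (M ⊙ (Atᵀ * Y)) * Hsᵀ) p.2 p.1)
        = H *ᵥ (fun p : Fin L × Fin n => Y p.2 p.1))
    (d : Fin L → ℝ)
    (hd : ∀ ℓ : Fin L, d ℓ = Matrix.trace
      (((Matrix.of fun (_ : Unit) (j : Fin L) => if j = ℓ then (1 : ℝ) else 0)
            ⊗ₖ (1 : Matrix (Fin n) (Fin n) ℝ))
        * H *
        ((Matrix.of fun (_ : Fin L) (_ : Unit) => (1 : ℝ))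
            ⊗ₖ (1 : Matrix (Fin n) (Fin n) ℝ)))) :
    d = Hs *ᵥ (Mᵀ *ᵥ (fun _ => 1)) := by
  -- Entrywise formula for `H`, obtained by plugging standard basis matrices into `hH`.
  have hentry : ∀ (c : Fin L) (r : Fin n) (j : Fin L) (i : Fin n),
      H (c, r) (j, i) = Hs c j * ∑ k, At r k * (M k j * At i k) := by
    intro c r j i
    have h := congrFun (hH (Matrix.single i j 1)) (c, r)
    simp [Matrix.mulVec, dotProduct, Matrix.mul_apply, Matrix.single,
      Matrix.hadamard, Fintype.sum_prod_type, Finset.mul_sum, Finset.sum_mul,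
      ite_and, mul_ite, ite_mul, Finset.sum_ite_eq, Finset.sum_ite_eq'] at h
    rw [← h, ← Finset.sum_mul, mul_comm]
  have hAt' : ∀ k : Fin Kt, (∑ x, At x k * At x k) = 1 := by
    intro k
    have hk := congrFun (congrFun hAt k) k
    simpa [Matrix.mul_apply, Matrix.one_apply] using hk
  funext ℓ
  rw [hd]
  simp only [Matrix.trace, Matrix.diag, Matrix.mul_apply, Matrix.kroneckerMap_apply,
    Fintype.sum_prod_type, Matrix.one_apply, Matrix.of_apply, ite_mul, mul_ite,
    one_mul, mul_one, zero_mul, mul_zero, Finset.sum_ite_eq, Finset.sum_ite_eq',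
    Finset.mem_univ, if_true, Finset.sum_const, Finset.sum_const_zero,
    Finset.card_univ, Fintype.card_unit, one_smul]
  have hrhs : (Hs *ᵥ Mᵀ *ᵥ fun _ => (1:ℝ)) ℓ = ∑ j, Hs ℓ j * ∑ k, M k j := by
    simp [Matrix.mulVec, dotProduct, Matrix.transpose_apply]
  rw [hrhs]
  calc (∑ x : Fin n, ∑ j : Fin L, H (ℓ, x) (j, x))
      = ∑ j : Fin L, ∑ x : Fin n, H (ℓ, x) (j, x) := Finset.sum_comm
    _ = ∑ j, Hs ℓ j * ∑ k, M k j := by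
        refine Finset.sum_congr rfl fun j _ => ?_
        simp only [hentry, ← Finset.mul_sum]
        congr 1
        rw [Finset.sum_comm]
        refine Finset.sum_congr rfl fun k _ => ?_
        calc (∑ x, At x k * (M k j * At x k))
            = (∑ x, At x k * At x k) * M k j := by
              rw [Finset.sum_mul]
              exact Finset.sum_congr rfl fun x _ => by ring
          _ = M k j := by rw [hAt' k, one_mul]
end

section
/- Let P and Q be n×K real matrices, M a K×A real matrix, and u, w ∈ ℝ^A. Then tr[(uᵀ ⊗ P) · Diag(vec M) · (w ⊗ Qᵀ)] = 1_nᵀ (P ⊙ Q) M (u ⊙ w), where Diag(vec M) is the (KA)×(KA) diagonal matrix whose diagonal is the vector vec(M), and u ⊙ w denotes the entrywise product of the vectors u and w. -/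
open Matrix Kronecker

/-- The trace identity underlying equation (A.dfh2) of the paper:
`tr[(uᵀ ⊗ P) Diag(vec M) (w ⊗ Qᵀ)] = 1_nᵀ (P ⊙ Q) M (u ⊙ w)`. -/
theorem trace_kronecker_diag_identity
    {n K A : ℕ} (P Q : Matrix (Fin n) (Fin K) ℝ)
    (M : Matrix (Fin K) (Fin A) ℝ) (u w : Fin A → ℝ) :
    Matrix.trace
      (((Matrix.of fun (_ : Unit) (a : Fin A) => u a) ⊗ₖ P)
        * Matrix.diagonal (fun p : Fin A × Fin K => M p.2 p.1)
        * ((Matrix.of fun (a : Fin A) (_ : Unit) => w a) ⊗ₖ Qᵀ))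
      = (fun _ => (1 : ℝ)) ⬝ᵥ (((P ⊙ Q) * M) *ᵥ fun a => u a * w a) := by

  simp only [Matrix.trace, Matrix.diag, Matrix.mul_apply, Matrix.diagonal_apply,
    kroneckerMap_apply, Matrix.of_apply, Matrix.transpose_apply, dotProduct,
    Matrix.mulVec, Matrix.hadamard_apply, one_mul,
    Finset.mul_sum, Finset.sum_mul, Fintype.sum_prod_type, Finset.univ_unique, Finset.sum_singleton, Prod.mk.injEq, ite_and,
    ite_mul, mul_ite, zero_mul, mul_zero, Finset.sum_ite_eq, Finset.sum_ite_eq', Finset.mem_univ, if_true]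
  refine Finset.sum_congr rfl fun i _ => ?_
  refine Finset.sum_congr rfl fun a _ => ?_
  refine Finset.sum_congr rfl fun k _ => ?_
  ring
end
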